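/- For n ≥ 2 let λ_n = ⌈n log n⌉, the least integer greater than or equal to n log n. Then ∑_{n=2}^∞ 1/λ_n = ∞ (the Müntz–Szász divergence condition holds), and nevertheless x ∑_{n=2}^∞ exp(−λ_n x) → 0 as x → 0 from the right. -/
import Mathlib

set_option maxHeartbeats 1000000
open Filter Topology

noncomputable section

/-- For `n ≥ 2`, `λ_n = ⌈n log n⌉` (here indexed by `n + 2` for `n : ℕ`). -/
def muntzLam (n : ℕ) : ℝ := (⌈((n : ℝ) + 2) * Real.log ((n : ℝ) + 2)⌉ : ℤ)

lemma muntz_L_one_le (n : ℕ) : 1 ≤ ((n : ℝ) + 2) * Real.log ((n : ℝ) + 2) := by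
  have h0 : (0 : ℝ) ≤ (n : ℝ) := Nat.cast_nonneg n
  have h2 : (2 : ℝ) ≤ (n : ℝ) + 2 := by linarith
  have hl : Real.log 2 ≤ Real.log ((n : ℝ) + 2) := Real.log_le_log (by norm_num) h2
  have hl2 : (0.6931471803 : ℝ) < Real.log 2 := Real.log_two_gt_d9
  nlinarith [Real.log_nonneg (by linarith : (1:ℝ) ≤ (n:ℝ) + 2)]

lemma muntz_le_lam (n : ℕ) : ((n : ℝ) + 2) * Real.log ((n : ℝ) + 2) ≤ muntzLam n :=
  Int.le_ceil _

lemma muntz_lam_pos (n : ℕ) : 0 < muntzLam n :=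
  lt_of_lt_of_le (by linarith [muntz_L_one_le n]) (muntz_le_lam n)

lemma muntz_lam_le (n : ℕ) : muntzLam n ≤ 2 * (((n : ℝ) + 2) * Real.log ((n : ℝ) + 2)) := by
  have := Int.ceil_lt_add_one (((n : ℝ) + 2) * Real.log ((n : ℝ) + 2))
  have := muntz_L_one_le n
  unfold muntzLam
  linarith

theorem ceil_nlogn_muntz_but_no_frame :
    (¬ Summable fun n : ℕ => 1 / muntzLam n) ∧
    Tendsto (fun x : ℝ => x * ∑' n : ℕ, Real.exp (-(muntzLam n * x)))
      (𝓝[>] (0 : ℝ)) (𝓝 0) := by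
  constructor
  · -- divergence of ∑ 1/λ_n
    intro hs
    set g : ℕ → ℝ := fun n => 1 / (((n : ℝ) + 1) * Real.log ((n : ℝ) + 1)) with hg
    have hgnonneg : ∀ m : ℕ, 0 ≤ g m := by
      intro m
      have h1 : (1:ℝ) ≤ (m:ℝ) + 1 := by have := Nat.cast_nonneg (α := ℝ) m; linarith
      have h2 : 0 ≤ Real.log ((m:ℝ)+1) := Real.log_nonneg h1
      have h3 : (0:ℝ) ≤ ((m:ℝ)+1) * Real.log ((m:ℝ)+1) := mul_nonneg (by linarith) h2
      exact div_nonneg zero_le_one h3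
    have hgsum : Summable g := by
      rw [← summable_nat_add_iff 1]
      have hle : ∀ n : ℕ, g (n + 1) ≤ 2 * (1 / muntzLam n) := by
        intro n
        have hL := muntz_L_one_le n
        have hlam := muntz_lam_le n
        have hpos := muntz_lam_pos n
        have heq : g (n + 1) = 1 / (((n : ℝ) + 2) * Real.log ((n : ℝ) + 2)) := by
          simp only [hg]; push_cast; ring_nf
        rw [heq, show (2:ℝ) * (1 / muntzLam n) = 2 / muntzLam n by ring,
          div_le_div_iff₀ (by linarith) hpos]
        nlinarith
      have h2 : Summable fun n : ℕ => 2 * (1 / muntzLam n) := hs.mul_left 2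
      exact h2.of_nonneg_of_le (fun n => hgnonneg (n+1)) hle
    have hcond : Summable fun k : ℕ => (2 : ℝ) ^ k * g (2 ^ k) := by
      refine (summable_condensed_iff_of_nonneg hgnonneg ?_).mpr hgsum
      intro m n hm hmn
      simp only [hg]
      have hm1 : (2:ℝ) ≤ (m:ℝ) + 1 := by exact_mod_cast Nat.succ_le_succ hm
      have hlogm : 0 < Real.log ((m:ℝ)+1) := Real.log_pos (by linarith)
      have hmn' : (m:ℝ) ≤ (n:ℝ) := by exact_mod_cast hmn
      apply one_div_le_one_div_of_le (by positivity)
      have hlog : Real.log ((m:ℝ)+1) ≤ Real.log ((n:ℝ)+1) :=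
        Real.log_le_log (by linarith) (by linarith)
      nlinarith
    have hharm : Summable fun k : ℕ => 1 / (2 * Real.log 2 * ((k : ℝ) + 1)) := by
      have hlog2 : (0:ℝ) < Real.log 2 := Real.log_pos (by norm_num)
      refine hcond.of_nonneg_of_le (fun k => by positivity) (fun k => ?_)
      have h2k : (1:ℝ) ≤ (2:ℝ) ^ k := one_le_pow₀ (by norm_num)
      have hcast : (((2:ℕ) ^ k : ℕ) : ℝ) = (2:ℝ) ^ k := by push_cast; ring
      have h1 : (((2:ℕ)^k : ℕ):ℝ) + 1 ≤ (2:ℝ)^(k+1) := by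
        rw [hcast, pow_succ]; linarith
      have hglog : Real.log ((((2:ℕ)^k : ℕ):ℝ) + 1) ≤ ((k:ℝ)+1) * Real.log 2 := by
        calc Real.log ((((2:ℕ)^k : ℕ):ℝ) + 1) ≤ Real.log ((2:ℝ)^(k+1)) :=
              Real.log_le_log (by rw [hcast]; linarith) h1
          _ = ((k:ℝ)+1) * Real.log 2 := by rw [Real.log_pow]; push_cast; ring
      have hlogpos : 0 < Real.log ((((2:ℕ)^k : ℕ):ℝ) + 1) :=
        Real.log_pos (by rw [hcast]; linarith)
      simp only [hg]
      rw [mul_one_div, div_le_div_iff₀ (by positivity) (mul_pos (by positivity) hlogpos)]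
      nlinarith [hglog, h1, hlogpos.le, hlog2.le, h2k, hcast,
        Nat.cast_nonneg (α := ℝ) k, pow_succ (2:ℝ) k]
    have hone : Summable fun k : ℕ => 1 / ((k : ℝ) + 1) := by
      have hlog2 : (0:ℝ) < Real.log 2 := Real.log_pos (by norm_num)
      have h := hharm.mul_left (2 * Real.log 2)
      refine (summable_congr fun k => ?_).mp h
      field_simp
    have hfin : Summable fun k : ℕ => 1 / ((k + 1 : ℕ) : ℝ) := by
      refine (summable_congr fun k => ?_).mpr hone
      push_cast; ring
    exact Real.not_summable_one_div_natCast ((summable_nat_add_iff 1).mp hfin)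
  · -- no frame bound: x * ∑ exp(-λ_n x) → 0
    rw [Metric.tendsto_nhdsWithin_nhds]
    intro ε hε
    set M : ℕ := ⌈Real.exp (4 / ε)⌉₊ + 3 with hM
    have hM3 : (3:ℝ) ≤ (M:ℝ) := by
      have : (3:ℕ) ≤ M := by omega
      exact_mod_cast this
    set c : ℝ := Real.log M with hc
    have hc1 : 1 < c := by
      rw [hc, ← Real.log_exp 1]
      apply Real.log_lt_log (Real.exp_pos _)
      have := Real.exp_one_lt_d9
      linarith
    have hcε : 4 / ε ≤ c := by
      have hexpM : Real.exp (4/ε) ≤ (M:ℝ) := by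
        have h1 : Real.exp (4/ε) ≤ (⌈Real.exp (4/ε)⌉₊ : ℝ) := Nat.le_ceil _
        have h2 : ((⌈Real.exp (4/ε)⌉₊ : ℕ) : ℝ) ≤ (M:ℝ) := by
          rw [hM]; push_cast; linarith
        linarith
      rw [hc]
      calc 4/ε = Real.log (Real.exp (4/ε)) := (Real.log_exp _).symm
        _ ≤ Real.log M := Real.log_le_log (Real.exp_pos _) hexpM
    have hcpos : 0 < c := by linarith
    clear_value M c
    refine ⟨min (1/c) (ε/(2*((M:ℝ)+1))),
      lt_min (by positivity) (by positivity), ?_⟩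
    intro x hx hxd
    have hx' : 0 < x := hx
    rw [Real.dist_eq, sub_zero, abs_of_pos hx'] at hxd
    have hx1 : x < 1/c := lt_of_lt_of_le hxd (min_le_left _ _)
    have hx2 : x < ε/(2*((M:ℝ)+1)) := lt_of_lt_of_le hxd (min_le_right _ _)
    have hcx1 : c * x < 1 := by
      rw [lt_div_iff₀ hcpos] at hx1; linarith [hx1]
    -- summability
    have hlog2 : (0:ℝ) < Real.log 2 := Real.log_pos (by norm_num)
    have hsum : Summable (fun n : ℕ => Real.exp (-(muntzLam n * x))) := by
      refine Summable.of_nonneg_of_le (fun n => (Real.exp_pos _).le) (fun n => ?_)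
        ((summable_geometric_of_lt_one (Real.exp_pos _).le ?_) :
          Summable fun n => (Real.exp (-(Real.log 2 * x)))^n)
      · rw [← Real.exp_nat_mul]
        apply Real.exp_le_exp.mpr
        have h1 := muntz_le_lam n
        have hlogn : Real.log 2 ≤ Real.log ((n:ℝ)+2) :=
          Real.log_le_log (by norm_num) (by have := Nat.cast_nonneg (α := ℝ) n; linarith)
        have hn0 : (0:ℝ) ≤ (n:ℝ) := Nat.cast_nonneg n
        have hlam : (n:ℝ) * Real.log 2 ≤ muntzLam n := by
          calc (n:ℝ) * Real.log 2 ≤ ((n:ℝ)+2) * Real.log ((n:ℝ)+2) := by nlinarith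
            _ ≤ muntzLam n := h1
        nlinarith
      · rw [Real.exp_lt_one_iff]; nlinarith
    have hsumtail : Summable (fun n : ℕ => Real.exp (-(muntzLam (n + M) * x))) :=
      (summable_nat_add_iff (f := fun n => Real.exp (-(muntzLam n * x))) M).mpr hsum
    -- geometric bound on the tail
    have hr0 : (0:ℝ) ≤ Real.exp (-(c*x)) := (Real.exp_pos _).le
    have hr1 : Real.exp (-(c*x)) < 1 := by
      rw [Real.exp_lt_one_iff]; nlinarith
    have htail : ∑' n : ℕ, Real.exp (-(muntzLam (n + M) * x)) ≤ (1 - Real.exp (-(c*x)))⁻¹ := by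
      rw [← tsum_geometric_of_lt_one hr0 hr1]
      refine Summable.tsum_le_tsum (fun n => ?_) hsumtail (summable_geometric_of_lt_one hr0 hr1)
      rw [← Real.exp_nat_mul]
      apply Real.exp_le_exp.mpr
      have h1 := muntz_le_lam (n + M)
      have hn0 : (0:ℝ) ≤ (n:ℝ) := Nat.cast_nonneg n
      have hcastnM : ((n + M : ℕ):ℝ) = (n:ℝ) + (M:ℝ) := by push_cast; ring
      have hlog : c ≤ Real.log (((n + M : ℕ):ℝ)+2) := by
        rw [hc]
        exact Real.log_le_log (by linarith) (by rw [hcastnM]; linarith)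
      have hlogpos : 0 < Real.log (((n + M : ℕ):ℝ)+2) := lt_of_lt_of_le hcpos hlog
      have hlam : (n:ℝ) * c ≤ muntzLam (n + M) := by
        calc (n:ℝ) * c ≤ (((n+M:ℕ):ℝ)+2) * Real.log (((n+M:ℕ):ℝ)+2) := by
              rw [hcastnM] at hlog hlogpos ⊢
              nlinarith [Nat.cast_nonneg (α := ℝ) M]
          _ ≤ muntzLam (n + M) := h1
      nlinarith
    -- head bound
    have hhead : ∑ i ∈ Finset.range M, Real.exp (-(muntzLam i * x)) ≤ (M:ℝ) := by
      calc ∑ i ∈ Finset.range M, Real.exp (-(muntzLam i * x))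
          ≤ ∑ i ∈ Finset.range M, 1 := by
            refine Finset.sum_le_sum fun i _ => ?_
            rw [Real.exp_le_one_iff]
            have := muntz_lam_pos i
            nlinarith
        _ = (M:ℝ) := by simp
    have hsplit := Summable.sum_add_tsum_nat_add (f := fun n => Real.exp (-(muntzLam n * x))) M hsum
    have hT : ∑' n : ℕ, Real.exp (-(muntzLam n * x)) ≤ (M:ℝ) + (1 - Real.exp (-(c*x)))⁻¹ := by
      rw [← hsplit]; exact add_le_add hhead htail
    -- 1 - e^{-cx} ≥ cx/2
    have hcx0 : 0 < c * x := mul_pos hcpos hx'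
    have hexpub : Real.exp (-(c*x)) ≤ (c*x + 1)⁻¹ := by
      rw [Real.exp_neg]
      exact inv_anti₀ (by linarith) (Real.add_one_le_exp (c*x))
    have hmul : (c*x + 1)⁻¹ * (c*x + 1) = 1 := by
      field_simp
    have hlb : c*x/2 ≤ 1 - Real.exp (-(c*x)) := by
      nlinarith [hexpub, hmul, hcx0, hcx1]
    have h1e : 0 < 1 - Real.exp (-(c*x)) := lt_of_lt_of_le (by positivity) hlb
    have hinv : (1 - Real.exp (-(c*x)))⁻¹ ≤ 2/(c*x) := by
      have := inv_anti₀ (by positivity : (0:ℝ) < c*x/2) hlb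
      calc (1 - Real.exp (-(c*x)))⁻¹ ≤ (c*x/2)⁻¹ := this
        _ = 2/(c*x) := by rw [inv_div]
    have h2c : 2 / c ≤ ε / 2 := by
      rw [div_le_div_iff₀ hcpos (by norm_num)]
      have h4 : 4 ≤ ε * c := by
        have := mul_le_mul_of_nonneg_left hcε hε.le
        rw [mul_div_cancel₀ _ (ne_of_gt hε)] at this
        linarith
      linarith
    have hxM : x * (M:ℝ) < ε/2 := by
      rw [lt_div_iff₀ (by positivity : (0:ℝ) < 2*((M:ℝ)+1))] at hx2
      nlinarith
    have hTnn : 0 ≤ ∑' n : ℕ, Real.exp (-(muntzLam n * x)) :=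
      tsum_nonneg fun n => (Real.exp_pos _).le
    rw [Real.dist_eq, sub_zero, abs_of_nonneg (mul_nonneg hx'.le hTnn)]
    calc x * ∑' n : ℕ, Real.exp (-(muntzLam n * x))
        ≤ x * ((M:ℝ) + (1 - Real.exp (-(c*x)))⁻¹) :=
          mul_le_mul_of_nonneg_left hT hx'.le
      _ = x * (M:ℝ) + x * (1 - Real.exp (-(c*x)))⁻¹ := by ring
      _ ≤ x * (M:ℝ) + x * (2/(c*x)) := by
          have := mul_le_mul_of_nonneg_left hinv hx'.le
          linarith
      _ = x * (M:ℝ) + 2/c := by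
          rw [mul_div_assoc']
          congr 1
          field_simp
      _ < ε/2 + ε/2 := by linarith
      _ = ε := by ring
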